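/- Let t^M = (t^M_0,…,t^M_{M−1}) denote the equalized solution with uniform weights and M levels. Then for every δ > 0 there exists N such that for all M ≥ N, max_{1 ≤ k ≤ M−1} ( t^M_k − t^M_{k−1} ) < δ. -/

import Mathlib

/-- The pairwise large-deviations rate
`r_{g,h}(p,q) = -(g+h)·log[(1-p)^{g/(g+h)}·(1-q)^{h/(g+h)} + p^{g/(g+h)}·q^{h/(g+h)}]`. -/
noncomputable def pairRate (g h p q : ℝ) : ℝ :=
  -(g + h) *
    Real.log ((1 - p) ^ (g / (g + h)) * (1 - q) ^ (h / (g + h))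
      + p ^ (g / (g + h)) * q ^ (h / (g + h)))

/-- The `i`-th rate (for `1 ≤ i ≤ M-1`) of a level vector `t` with weights `g`:
`r₁ = -g₁·log(1-t₁)`, `rᵢ = r_{g_{i-1},g_i}(t_{i-1},t_i)` for `2 ≤ i ≤ M-2`, and
`r_{M-1} = -g_{M-2}·log(t_{M-2})`. -/
noncomputable def rateAt (M : ℕ) (g t : ℕ → ℝ) (i : ℕ) : ℝ :=
  if i = 1 then -(g 1) * Real.log (1 - t 1)
  else if i = M - 1 then -(g (M - 2)) * Real.log (t (M - 2))
  else pairRate (g (i - 1)) (g i) (t (i - 1)) (t i)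

/-- `t` is an equalized solution with `M` levels for the weights `g`, with common rate `r`:
`t₀ = 0 < t₁ < ⋯ < t_{M-2} < 1 = t_{M-1}` and all of the `M-1` rates equal `r`. -/
def IsEqualizedWithRate (M : ℕ) (g t : ℕ → ℝ) (r : ℝ) : Prop :=
  t 0 = 0 ∧ t (M - 1) = 1 ∧ (∀ i, i < M - 1 → t i < t (i + 1)) ∧
    ∀ i, 1 ≤ i → i ≤ M - 1 → rateAt M g t i = r

/-- `t` is an equalized solution with `M` levels for the weights `g`. -/
def IsEqualizedSol (M : ℕ) (g t : ℕ → ℝ) : Prop :=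
  ∃ r, IsEqualizedWithRate M g t r


/-!
Every rate `r` of a level vector is `-2 log β` for a coefficient `β` squeezed between
`1 - d` and `1 - d² / 4`, where `d` is the corresponding gap: for an interior gap `β` is the
Bhattacharyya coefficient of the two levels, for the two end gaps `β = √(1 - d)`.
Since all rates are equal, so are the coefficients, hence `d_j² ≤ 4 d_i` for any two gaps.
The gaps sum to `1`, so one of them is at most `1 / (M - 1)`, and then every gap is at most
`2 / √(M - 1)`.
-/

open Real Finset

noncomputable def bhattacharyya (p q : ℝ) : ℝ := √(1 - p) * √(1 - q) + √p * √q

lemma pairRate_one_one (p q : ℝ) : pairRate 1 1 p q = -2 * log (bhattacharyya p q) := by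
  simp only [pairRate, bhattacharyya, sqrt_eq_rpow]
  norm_num

section Bounds

variable {p q x : ℝ}

lemma one_sub_sub_le_bhattacharyya (hp : 0 ≤ p) (hpq : p ≤ q) (hq : q ≤ 1) :
    1 - (q - p) ≤ bhattacharyya p q := by
  have h₁ : 1 - q ≤ √(1 - p) * √(1 - q) :=
    calc 1 - q = √(1 - q) * √(1 - q) := (mul_self_sqrt (by linarith)).symm
      _ ≤ √(1 - p) * √(1 - q) := by gcongr 2; linarith
  have h₂ : p ≤ √p * √q :=
    calc p = √p * √p := (mul_self_sqrt hp).symm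
      _ ≤ √p * √q := by gcongr
  unfold bhattacharyya
  linarith

lemma bhattacharyya_le (hp : 0 ≤ p) (hpq : p ≤ q) (hq : q ≤ 1) :
    bhattacharyya p q ≤ 1 - (q - p) ^ 2 / 4 := by
  set a := √p
  set b := √q
  set c := √(1 - q)
  set e := √(1 - p)
  have ha : a ^ 2 = p := sq_sqrt hp
  have hb : b ^ 2 = q := sq_sqrt (hp.trans hpq)
  have hc : c ^ 2 = 1 - q := sq_sqrt (by linarith)
  have he : e ^ 2 = 1 - p := sq_sqrt (by linarith)
  have hab : a ≤ b := sqrt_le_sqrt hpq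
  have hce : c ≤ e := sqrt_le_sqrt (by linarith)
  have hb1 : b ≤ 1 := sqrt_le_one.2 hq
  have he1 : e ≤ 1 := sqrt_le_one.2 (by linarith)
  have hba : b + a ≤ 2 := by linarith
  have hec : e + c ≤ 2 := by linarith [sqrt_nonneg (1 - q)]
  -- `q - p = (b - a)(b + a) = (e - c)(e + c)`, while `2 (1 - β) = (b - a)² + (e - c)²`.
  have hgap : (q - p) ^ 2 = (b - a) * (e - c) * ((b + a) * (e + c)) :=
    calc (q - p) ^ 2 = ((b - a) * (b + a)) * ((e - c) * (e + c)) := by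
          rw [sq]; congr 1 <;> [linear_combination ha - hb; linear_combination hc - he]
      _ = (b - a) * (e - c) * ((b + a) * (e + c)) := by ring
  have hprod : (b + a) * (e + c) ≤ 4 := by
    nlinarith [sqrt_nonneg p, sqrt_nonneg (1 - q)]
  have hdiff : 0 ≤ (b - a) * (e - c) := mul_nonneg (by linarith) (by linarith)
  have : (q - p) ^ 2 ≤ 2 * ((b - a) ^ 2 + (e - c) ^ 2) := by
    rw [hgap]
    nlinarith [sq_nonneg (b - a - (e - c))]
  unfold bhattacharyya
  nlinarith

lemma le_sqrt_self (hx₀ : 0 ≤ x) (hx₁ : x ≤ 1) : x ≤ √x :=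
  calc x = √x * √x := (mul_self_sqrt hx₀).symm
    _ ≤ √x := mul_le_of_le_one_left (sqrt_nonneg x) (sqrt_le_one.2 hx₁)

lemma sqrt_le_one_sub_sq (hx₀ : 0 ≤ x) (hx₁ : x ≤ 1) : √x ≤ 1 - (1 - x) ^ 2 / 4 := by
  nlinarith [sq_sqrt hx₀, sq_nonneg (√x - 1)]

end Bounds

namespace IsEqualizedWithRate

variable {M : ℕ} {g t : ℕ → ℝ} {r : ℝ}

lemma strictMonoOn (h : IsEqualizedWithRate M g t r) : StrictMonoOn t (Set.Iic (M - 1)) :=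
  strictMonoOn_Iic_of_lt_succ h.2.2.1

lemma nonneg (h : IsEqualizedWithRate M g t r) {i : ℕ} (hi : i ≤ M - 1) : 0 ≤ t i :=
  h.1 ▸ h.strictMonoOn.monotoneOn (Set.mem_Iic.2 (Nat.zero_le _)) hi (Nat.zero_le i)

lemma pos (h : IsEqualizedWithRate M g t r) {i : ℕ} (hi₁ : 1 ≤ i) (hi : i ≤ M - 1) : 0 < t i :=
  h.1 ▸ h.strictMonoOn (Set.mem_Iic.2 (Nat.zero_le _)) hi hi₁

lemma le_one (h : IsEqualizedWithRate M g t r) {i : ℕ} (hi : i ≤ M - 1) : t i ≤ 1 :=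
  h.2.1 ▸ h.strictMonoOn.monotoneOn hi (Set.mem_Iic.2 le_rfl) hi

lemma lt_one (h : IsEqualizedWithRate M g t r) {i : ℕ} (hi : i < M - 1) : t i < 1 :=
  h.2.1 ▸ h.strictMonoOn hi.le (Set.mem_Iic.2 le_rfl) hi

lemma sum_gaps (h : IsEqualizedWithRate M g t r) :
    ∑ i ∈ range (M - 1), (t (i + 1) - t i) = 1 := by
  rw [sum_range_sub, h.2.1, h.1, sub_zero]

lemma exists_gap_le (h : IsEqualizedWithRate M g t r) (hM : 2 ≤ M) :
    ∃ i, 1 ≤ i ∧ i ≤ M - 1 ∧ t i - t (i - 1) ≤ 1 / ((M : ℝ) - 1) := by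
  have hM₁ : ((M - 1 : ℕ) : ℝ) = (M : ℝ) - 1 := by push_cast [show 1 ≤ M by omega]; ring
  have hsum : ∑ i ∈ range (M - 1), (t (i + 1) - t i) ≤
      ∑ _i ∈ range (M - 1), 1 / ((M : ℝ) - 1) := by
    rw [h.sum_gaps, sum_const, card_range, nsmul_eq_mul, hM₁,
      mul_one_div_cancel (by rw [← hM₁]; exact_mod_cast (show M - 1 ≠ 0 by omega))]
  obtain ⟨i, hi, hgap⟩ := exists_le_of_sum_le (nonempty_range_iff.2 (by omega)) hsum
  exact ⟨i + 1, by omega, by rw [mem_range] at hi; omega, by simpa using hgap⟩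

lemma gap_bounds (h : IsEqualizedWithRate M (fun _ => 1) t r) (hM : 3 ≤ M) {i : ℕ}
    (hi₁ : 1 ≤ i) (hi : i ≤ M - 1) :
    1 - (t i - t (i - 1)) ≤ exp (-r / 2) ∧ exp (-r / 2) ≤ 1 - (t i - t (i - 1)) ^ 2 / 4 := by
  suffices ∃ β, 0 < β ∧ r = -2 * log β ∧
      1 - (t i - t (i - 1)) ≤ β ∧ β ≤ 1 - (t i - t (i - 1)) ^ 2 / 4 by
    obtain ⟨β, hβ, rfl, hβ_bounds⟩ := this
    rwa [show -(-2 * log β) / 2 = log β by ring, exp_log hβ]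
  have hr := h.2.2.2 i hi₁ hi
  unfold rateAt at hr
  by_cases hi_first : i = 1
  · subst hi_first
    simp only [if_true] at hr
    have ht₁ := h.lt_one (i := 1) (by omega)
    have ht₀ := h.nonneg (i := 1) (by omega)
    refine ⟨√(1 - t 1), sqrt_pos.2 (by linarith), ?_, ?_⟩
    · rw [log_sqrt (by linarith), ← hr]
      ring
    · simpa [h.1] using And.intro (le_sqrt_self (x := 1 - t 1) (by linarith) (by linarith))
        (sqrt_le_one_sub_sq (x := 1 - t 1) (by linarith) (by linarith))
  by_cases hi_last : i = M - 1
  · subst hi_last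
    rw [if_neg hi_first, if_pos rfl] at hr
    have hprev : M - 1 - 1 = M - 2 := by omega
    have ht := h.pos (i := M - 2) (by omega) (by omega)
    have ht₁ := h.le_one (i := M - 2) (by omega)
    refine ⟨√(t (M - 2)), sqrt_pos.2 ht, ?_, ?_⟩
    · rw [log_sqrt ht.le, ← hr]
      ring
    · rw [hprev, h.2.1]
      exact ⟨by simpa using le_sqrt_self ht.le ht₁, sqrt_le_one_sub_sq ht.le ht₁⟩
  rw [if_neg hi_first, if_neg hi_last, pairRate_one_one] at hr
  have hp := h.pos (i := i - 1) (by omega) (by omega)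
  have hpq : t (i - 1) ≤ t i := h.strictMonoOn.monotoneOn (Set.mem_Iic.2 (by omega)) hi (by omega)
  have hq := h.le_one hi
  have hlow := one_sub_sub_le_bhattacharyya hp.le hpq hq
  exact ⟨_, by linarith, hr.symm, hlow, bhattacharyya_le hp.le hpq hq⟩

lemma sq_gap_le_four_mul_gap (h : IsEqualizedWithRate M (fun _ => 1) t r) (hM : 3 ≤ M)
    {i j : ℕ} (hi₁ : 1 ≤ i) (hi : i ≤ M - 1) (hj₁ : 1 ≤ j) (hj : j ≤ M - 1) :
    (t j - t (j - 1)) ^ 2 ≤ 4 * (t i - t (i - 1)) := by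
  have := (h.gap_bounds hM hi₁ hi).1
  have := (h.gap_bounds hM hj₁ hj).2
  linarith

end IsEqualizedWithRate

/-- **The maximal gap between consecutive levels vanishes.**
If `t^M` is the equalized solution with uniform weights and `M` levels, then for every
`δ > 0` there is `N` such that for all `M ≥ N`,
`max_{1 ≤ k ≤ M-1} (t^M_k - t^M_{k-1}) < δ`. -/
theorem equalized_gaps_tendsto_zero :
    ∀ δ : ℝ, 0 < δ → ∃ N : ℕ, ∀ M : ℕ, N ≤ M →
      ∀ t : ℕ → ℝ, IsEqualizedSol M (fun _ => (1 : ℝ)) t →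
        ∀ k, 1 ≤ k → k ≤ M - 1 → t k - t (k - 1) < δ := by
  intro δ hδ
  obtain ⟨N, hN⟩ := exists_nat_gt (4 / δ ^ 2)
  refine ⟨N + 3, fun M hM t ⟨r, h⟩ k hk₁ hk => ?_⟩
  obtain ⟨i, hi₁, hi, hgap⟩ := h.exists_gap_le (by omega)
  have hNM : (N : ℝ) < M - 1 := by
    have : ((N + 3 : ℕ) : ℝ) ≤ M := by exact_mod_cast hM
    push_cast at this
    linarith
  have hδM : 4 / ((M : ℝ) - 1) < δ ^ 2 := by
    rw [div_lt_iff₀ (by linarith [N.cast_nonneg (α := ℝ)])]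
    rw [div_lt_iff₀ (by positivity)] at hN
    nlinarith
  refine lt_of_pow_lt_pow_left₀ 2 hδ.le ?_
  calc (t k - t (k - 1)) ^ 2 ≤ 4 * (t i - t (i - 1)) :=
        h.sq_gap_le_four_mul_gap (by omega) hi₁ hi hk₁ hk
    _ ≤ 4 * (1 / ((M : ℝ) - 1)) := by gcongr
    _ = 4 / ((M : ℝ) - 1) := by ring
    _ < δ ^ 2 := hδM
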